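/- arXiv:1008.1081 — 2 statements merged into one kernel-verified Lean document; each statement's English description precedes it below -/
import Mathlib

section
/- (Theorem 5.1, forward direction.) Let Ã ∈ M be closed, corresponding to T : V → W. Then T is a densely defined operator in V (i.e., D(T) is dense in V), T maps into W, T is closed as an operator from V to W, and D(Ã) = {u ∈ D(A_max) : u_ζ ∈ D(T) and pr_W(A_max u) = T u_ζ}. -/
noncomputable section

open Filter Topology

namespace GrubbExt

variable {H : Type*} [NormedAddCommGroup H] [InnerProductSpace ℂ H] [CompleteSpace H]

/-- The inclusion of a closed subspace composed with the orthogonal projection onto it,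
as a continuous linear map `H →L[ℂ] H`.  This is `i_K ∘ pr_K` in the notation of the paper. -/
def projCl (K : Submodule ℂ H) (hK : IsClosed (K : Set H)) : H →L[ℂ] H :=
  haveI : CompleteSpace K := hK.completeSpace_coe
  K.subtypeL.comp K.orthogonalProjectionOnto

/-- `R` is the (everywhere defined, bounded) inverse of `P - lam`. -/
structure IsResolvent (P : H →ₗ.[ℂ] H) (lam : ℂ) (R : H →L[ℂ] H) : Prop where
  mem : ∀ f : H, R f ∈ P.domain
  left : ∀ u : P.domain, R (P u - lam • (u : H)) = u
  right : ∀ f : H, P ⟨R f, mem f⟩ - lam • R f = f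

/-- `E^λ := I + λ(A_γ - λ)^{-1}`, given the resolvent `R = (A_γ - λ)^{-1}`. -/
def Eop (lam : ℂ) (R : H →L[ℂ] H) : H →L[ℂ] H := ContinuousLinearMap.id ℂ H + lam • R

/-- `E'^{λ̄} := I + λ̄(A_γ^* - λ̄)^{-1}`, given the resolvent `R' = (A_γ^* - λ̄)^{-1}`. -/
def Eop' (lam : ℂ) (R' : H →L[ℂ] H) : H →L[ℂ] H :=
  ContinuousLinearMap.id ℂ H + (starRingEnd ℂ lam) • R'

/-- The resolvent set of a partially defined operator. -/
def resSet (P : H →ₗ.[ℂ] H) : Set ℂ := {lam | ∃ R : H →L[ℂ] H, IsResolvent P lam R}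

/-- The set of "Rayleigh quotients" `Re⟨Pu,u⟩` over unit vectors `u` in the domain of `P`;
the lower bound `m(P)` is the infimum of this set. -/
def raySet (P : H →ₗ.[ℂ] H) : Set ℝ :=
  {r | ∃ u : P.domain, ‖(u : H)‖ = 1 ∧ r = (inner ℂ (P u) (u : H) : ℂ).re}

/-- The abstract set-up of Grubb's extension theory: a dual pair `A_min, A'_min` of closed
densely defined operators in a Hilbert space `H`, together with a reference operator `A_γ`
lying between `A_min` and `A_max := (A'_min)*`, which is bijective with bounded inverse
(and whose adjoint is likewise bijective with bounded inverse). -/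
structure Setup (H : Type*) [NormedAddCommGroup H] [InnerProductSpace ℂ H]
    [CompleteSpace H] where
  Amin : H →ₗ.[ℂ] H
  Amin' : H →ₗ.[ℂ] H
  closed_Amin : IsClosed (Amin.graph : Set (H × H))
  closed_Amin' : IsClosed (Amin'.graph : Set (H × H))
  dense_Amin : Dense (Amin.domain : Set H)
  dense_Amin' : Dense (Amin'.domain : Set H)
  Amin_le_max : Amin ≤ Amin'.adjoint
  Amin'_le_max' : Amin' ≤ Amin.adjoint
  Agam : H →ₗ.[ℂ] H
  Amin_le_Agam : Amin ≤ Agam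
  Agam_le_max : Agam ≤ Amin'.adjoint
  Agaminv : H →L[ℂ] H
  Agaminv_mem : ∀ f : H, Agaminv f ∈ Agam.domain
  Agaminv_left : ∀ u : Agam.domain, Agaminv (Agam u) = u
  Agaminv_right : ∀ f : H, Agam ⟨Agaminv f, Agaminv_mem f⟩ = f
  Agamstarinv : H →L[ℂ] H
  Agamstarinv_mem : ∀ f : H, Agamstarinv f ∈ Agam.adjoint.domain
  Agamstarinv_left : ∀ v : Agam.adjoint.domain, Agamstarinv (Agam.adjoint v) = v
  Agamstarinv_right : ∀ f : H, Agam.adjoint ⟨Agamstarinv f, Agamstarinv_mem f⟩ = f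

namespace Setup

variable (S : Setup H)

/-- `A_max := (A'_min)*`. -/
def Amax : H →ₗ.[ℂ] H := S.Amin'.adjoint

/-- `A'_max := (A_min)*`. -/
def Amax' : H →ₗ.[ℂ] H := S.Amin.adjoint

/-- `u_ζ := u - A_γ^{-1} A_max u`, the nullspace component of `u ∈ D(A_max)`. -/
def uzeta (u : S.Amax.domain) : H := (u : H) - S.Agaminv (S.Amax u)

/-- `v_{ζ'} := v - (A_γ^*)^{-1} A'_max v`, the nullspace component of `v ∈ D(A'_max)`. -/
def vzeta (v : S.Amax'.domain) : H := (v : H) - S.Agamstarinv (S.Amax' v)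

/-- `Z := ker A_max`, as a submodule of `H`. -/
def Zker : Submodule ℂ H := (LinearMap.ker S.Amax.toFun).map S.Amax.domain.subtype

/-- `Z' := ker A'_max`, as a submodule of `H`. -/
def Zker' : Submodule ℂ H := (LinearMap.ker S.Amax'.toFun).map S.Amax'.domain.subtype

lemma coe_Zker :
    (S.Zker : Set H) = ⋂ v : S.Amin'.domain, {y : H | (inner ℂ y (S.Amin' v) : ℂ) = 0} := by
  ext y
  simp only [Set.mem_iInter, Set.mem_setOf_eq, SetLike.mem_coe, Zker, Submodule.mem_map,
    LinearMap.mem_ker]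
  constructor
  · rintro ⟨u, hu, rfl⟩ v
    have h := (LinearPMap.adjoint_isFormalAdjoint S.dense_Amin') u v
    have hu' : S.Amin'.adjoint u = 0 := hu
    rw [hu'] at h
    simpa using h.symm
  · intro h
    have hmem : y ∈ S.Amax.domain := by
      refine LinearPMap.mem_adjoint_domain_of_exists _ ⟨0, fun x => ?_⟩
      simp [h x]
    refine ⟨⟨y, hmem⟩, ?_, rfl⟩
    exact LinearPMap.adjoint_apply_eq S.dense_Amin' ⟨y, hmem⟩ fun x => by simp [h x]

lemma isClosed_Zker : IsClosed (S.Zker : Set H) := by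
  rw [S.coe_Zker]
  exact isClosed_iInter fun v =>
    isClosed_eq (Continuous.inner continuous_id continuous_const) continuous_const

lemma coe_Zker' :
    (S.Zker' : Set H) = ⋂ v : S.Amin.domain, {y : H | (inner ℂ y (S.Amin v) : ℂ) = 0} := by
  ext y
  simp only [Set.mem_iInter, Set.mem_setOf_eq, SetLike.mem_coe, Zker', Submodule.mem_map,
    LinearMap.mem_ker]
  constructor
  · rintro ⟨u, hu, rfl⟩ v
    have h := (LinearPMap.adjoint_isFormalAdjoint S.dense_Amin) u v
    have hu' : S.Amin.adjoint u = 0 := hu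
    rw [hu'] at h
    simpa using h.symm
  · intro h
    have hmem : y ∈ S.Amax'.domain := by
      refine LinearPMap.mem_adjoint_domain_of_exists _ ⟨0, fun x => ?_⟩
      simp [h x]
    refine ⟨⟨y, hmem⟩, ?_, rfl⟩
    exact LinearPMap.adjoint_apply_eq S.dense_Amin ⟨y, hmem⟩ fun x => by simp [h x]

lemma isClosed_Zker' : IsClosed (S.Zker' : Set H) := by
  rw [S.coe_Zker']
  exact isClosed_iInter fun v =>
    isClosed_eq (Continuous.inner continuous_id continuous_const) continuous_const

/-- The orthogonal projection onto `Z = ker A_max`. -/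
def projZ : H →L[ℂ] H := projCl S.Zker S.isClosed_Zker

/-- The orthogonal projection onto `Z' = ker A'_max`. -/
def projZ' : H →L[ℂ] H := projCl S.Zker' S.isClosed_Zker'

variable (At : H →ₗ.[ℂ] H)

/-- `D(T) = {u_ζ : u ∈ D(Ã)}`, the set of nullspace components of elements of `D(Ã)`. -/
def dzeta : Set H := {x | ∃ u : S.Amax.domain, (u : H) ∈ At.domain ∧ x = S.uzeta u}

/-- `{v_{ζ'} : v ∈ D(Ã*)}`. -/
def dzeta' : Set H := {x | ∃ v : S.Amax'.domain, (v : H) ∈ At.adjoint.domain ∧ x = S.vzeta v}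

/-- `V := closure {u_ζ : u ∈ D(Ã)}`. -/
def Vsub : Submodule ℂ H := (Submodule.span ℂ (S.dzeta At)).topologicalClosure

/-- `W := closure {v_{ζ'} : v ∈ D(Ã*)}`. -/
def Wsub : Submodule ℂ H := (Submodule.span ℂ (S.dzeta' At)).topologicalClosure

lemma isClosed_Vsub : IsClosed ((S.Vsub At : Set H)) :=
  Submodule.isClosed_topologicalClosure _

lemma isClosed_Wsub : IsClosed ((S.Wsub At : Set H)) :=
  Submodule.isClosed_topologicalClosure _

/-- The orthogonal projection onto `V`. -/
def projV : H →L[ℂ] H := projCl (S.Vsub At) (S.isClosed_Vsub At)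

/-- The orthogonal projection onto `W`. -/
def projW : H →L[ℂ] H := projCl (S.Wsub At) (S.isClosed_Wsub At)

/-- The set `{(u_ζ, pr_W (A_max u)) : u ∈ D(Ã)}`, for a general closed subspace `W`. -/
def TgraphOn (W : Submodule ℂ H) (hW : IsClosed (W : Set H)) : Set (H × H) :=
  {p | ∃ u : S.Amax.domain, (u : H) ∈ At.domain ∧ p.1 = S.uzeta u ∧
    p.2 = projCl W hW (S.Amax u)}

/-- The graph of the operator `T : V → W` corresponding to `Ã`. -/
def Tgraph : Set (H × H) := S.TgraphOn At (S.Wsub At) (S.isClosed_Wsub At)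


/-- `F^λ := I - λ A_γ^{-1}`. -/
def Fop (lam : ℂ) : H →L[ℂ] H := ContinuousLinearMap.id ℂ H - lam • S.Agaminv

/-- `F'^{λ̄} := I - λ̄ (A_γ^*)^{-1}`. -/
def Fop' (lam : ℂ) : H →L[ℂ] H := ContinuousLinearMap.id ℂ H - (starRingEnd ℂ lam) • S.Agamstarinv

/-- `Z_λ := ker(A_max - λ)`, as a subset of `H`. -/
def ZkerL (lam : ℂ) : Set H :=
  {x | ∃ hx : x ∈ S.Amax.domain, S.Amax ⟨x, hx⟩ = lam • x}

/-- `Z'_{λ̄} := ker(A'_max - λ̄)`, as a subset of `H`. -/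
def ZkerL' (lam : ℂ) : Set H :=
  {x | ∃ hx : x ∈ S.Amax'.domain, S.Amax' ⟨x, hx⟩ = (starRingEnd ℂ lam) • x}

/-- `pr^λ_ζ u := u - (A_γ - λ)^{-1}(A_max - λ)u`, given the resolvent `R = (A_γ - λ)^{-1}`. -/
def uzetaL (lam : ℂ) (R : H →L[ℂ] H) (u : S.Amax.domain) : H :=
  (u : H) - R (S.Amax u - lam • (u : H))

/-- `pr^{λ̄}_{ζ'} v := v - (A_γ^* - λ̄)^{-1}(A'_max - λ̄)v`,
given the resolvent `R' = (A_γ^* - λ̄)^{-1}`. -/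
def vzetaL (lam : ℂ) (R' : H →L[ℂ] H) (v : S.Amax'.domain) : H :=
  (v : H) - R' (S.Amax' v - (starRingEnd ℂ lam) • (v : H))

/-- `D(T^λ) = {pr^λ_ζ u : u ∈ D(Ã)}`. -/
def dzetaL (lam : ℂ) (R : H →L[ℂ] H) : Set H :=
  {x | ∃ u : S.Amax.domain, (u : H) ∈ At.domain ∧ x = S.uzetaL lam R u}

/-- `{pr^{λ̄}_{ζ'} v : v ∈ D(Ã*)}`. -/
def dzetaL' (lam : ℂ) (R' : H →L[ℂ] H) : Set H :=
  {x | ∃ v : S.Amax'.domain, (v : H) ∈ At.adjoint.domain ∧ x = S.vzetaL lam R' v}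

/-- `V_λ := closure {pr^λ_ζ u : u ∈ D(Ã)}`. -/
def VLsub (lam : ℂ) (R : H →L[ℂ] H) : Submodule ℂ H :=
  (Submodule.span ℂ (S.dzetaL At lam R)).topologicalClosure

/-- `W_{λ̄} := closure {pr^{λ̄}_{ζ'} v : v ∈ D(Ã*)}`. -/
def WLsub (lam : ℂ) (R' : H →L[ℂ] H) : Submodule ℂ H :=
  (Submodule.span ℂ (S.dzetaL' At lam R')).topologicalClosure

lemma isClosed_WLsub (lam : ℂ) (R' : H →L[ℂ] H) : IsClosed ((S.WLsub At lam R' : Set H)) :=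
  Submodule.isClosed_topologicalClosure _

/-- The orthogonal projection onto `W_{λ̄}`. -/
def projWL (lam : ℂ) (R' : H →L[ℂ] H) : H →L[ℂ] H :=
  projCl (S.WLsub At lam R') (S.isClosed_WLsub At lam R')

/-- The graph of the operator `T^λ : V_λ → W_{λ̄}` corresponding to `Ã - λ`:
`{(pr^λ_ζ u, pr_{W_{λ̄}}((A_max - λ)u)) : u ∈ D(Ã)}`. -/
def TgraphL (lam : ℂ) (R R' : H →L[ℂ] H) : Set (H × H) :=
  {p | ∃ u : S.Amax.domain, (u : H) ∈ At.domain ∧ p.1 = S.uzetaL lam R u ∧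
    p.2 = S.projWL At lam R' (S.Amax u - lam • (u : H))}

/-- `G^λ_{V,W} x := -pr_W (λ E^λ x)`, where `W = W(Ã)`. -/
def Gval (lam : ℂ) (R : H →L[ℂ] H) (x : H) : H :=
  -(S.projW At (lam • Eop lam R x))

/-- `G^μ_{Z,Z} z := -pr_Z (μ E^μ z)`. -/
def GZval (lam : ℂ) (R : H →L[ℂ] H) (x : H) : H :=
  -(S.projZ (lam • Eop lam R x))

lemma mem_Amax_res {lam : ℂ} {Rt : H →L[ℂ] H} (h2 : At ≤ S.Amax)
    (hRt : IsResolvent At lam Rt) (w : H) :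
    S.Agaminv w - Rt (w - lam • S.Agaminv w) ∈ S.Amax.domain :=
  Submodule.sub_mem _ (S.Agam_le_max.1 (S.Agaminv_mem w)) (h2.1 (hRt.mem _))

/-- `M(λ) w := pr_ζ ((I - (Ã - λ)^{-1}(A_max - λ)) A_γ^{-1} w)`, the value of the abstract
`M`-function on `w`. -/
def Mval {lam : ℂ} {Rt : H →L[ℂ] H} (h2 : At ≤ S.Amax) (hRt : IsResolvent At lam Rt)
    (w : H) : H :=
  S.uzeta ⟨S.Agaminv w - Rt (w - lam • S.Agaminv w), S.mem_Amax_res At h2 hRt w⟩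

end Setup

/-! The shift `(x, y) ↦ (x + A_γ⁻¹ y, y)` maps the graph of `T` onto
`{(x, y) : y ∈ W, (x + A_γ⁻¹ y, y) ∈ G(Ã)}`, which is closed because `Ã` is. The point is that
`(A_γ⁻¹ f, f) ∈ G(Ã)` whenever `f ⊥ W`: for `v ∈ D(Ã*)` split `v = (A_γ*)⁻¹ A'_max v + v_ζ'` with
`v_ζ' ∈ W`, so `⟪Ã* v, A_γ⁻¹ f⟫ = ⟪v, f⟫`, and `Ã** = Ã`. The same fact recovers `u ∈ D(Ã)` from
`(u_ζ, pr_W A_max u) ∈ G(T)`, since `u` then differs from an element of `D(Ã)` by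
`A_γ⁻¹ (1 - pr_W) A_max u`. -/

section LinearPMapAdjoint

variable {𝕜 E F : Type*} [RCLike 𝕜] [NormedAddCommGroup E] [InnerProductSpace 𝕜 E]
  [NormedAddCommGroup F] [InnerProductSpace 𝕜 F] [CompleteSpace E]

theorem _root_.LinearPMap.adjoint_le_adjoint {A B : E →ₗ.[𝕜] F} (hA : Dense (A.domain : Set E))
    (hAB : A ≤ B) : B.adjoint ≤ A.adjoint := by
  refine LinearPMap.IsFormalAdjoint.le_adjoint hA fun x y => ?_
  rw [hAB.2 (x := x) (y := ⟨x, hAB.1 x.2⟩) rfl]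
  exact (LinearPMap.adjoint_isFormalAdjoint (hA.mono hAB.1)).symm _ y

/-- The inclusion `A** ⊆ A` for closed densely defined `A`: the graph of `A` is the orthogonal
complement of `{(-A* v, v)}` in `E ⊕ F`. -/
theorem _root_.LinearPMap.mem_graph_of_forall_inner_adjoint [CompleteSpace F]
    {A : E →ₗ.[𝕜] F} (hA : Dense (A.domain : Set E)) (hcl : A.IsClosed) {u : E} {f : F}
    (h : ∀ v : A.adjoint.domain, inner 𝕜 (A.adjoint v) u = inner 𝕜 (v : F) f) :
    (u, f) ∈ A.graph := by
  let e : WithLp 2 (E × F) ≃L[𝕜] E × F := WithLp.prodContinuousLinearEquiv 2 𝕜 E F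
  let G : Submodule 𝕜 (WithLp 2 (E × F)) := A.graph.comap (e : WithLp 2 (E × F) →ₗ[𝕜] E × F)
  have : CompleteSpace G := (hcl.preimage e.continuous).completeSpace_coe
  suffices WithLp.toLp 2 (u, f) ∈ Gᗮᗮ by rwa [G.orthogonal_orthogonal] at this
  refine (Submodule.mem_orthogonal _ _).2 fun z hz => ?_
  have hz_graph : ∀ w : A.domain, inner 𝕜 (-z.fst) (w : E) = inner 𝕜 z.snd (A w) := by
    intro w
    have hw := (Submodule.mem_orthogonal _ _).1 hz (WithLp.toLp 2 ((w : E), A w)) (A.mem_graph w)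
    simp only [WithLp.prod_inner_apply] at hw
    rw [inner_neg_left, neg_eq_iff_add_eq_zero, ← inner_conj_symm, ← inner_conj_symm z.snd,
      ← map_add]
    exact (congrArg _ hw).trans (map_zero _)
  have hz_dom : z.snd ∈ A.adjoint.domain :=
    LinearPMap.mem_adjoint_domain_of_exists _ ⟨_, hz_graph⟩
  have hz_adj := h ⟨z.snd, hz_dom⟩
  rw [LinearPMap.adjoint_apply_eq hA _ hz_graph, inner_neg_left] at hz_adj
  rw [WithLp.prod_inner_apply]
  exact neg_eq_iff_add_eq_zero.1 hz_adj

end LinearPMapAdjoint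

section projCl

variable (K : Submodule ℂ H) (hK : IsClosed (K : Set H))

lemma projCl_mem (x : H) : projCl K hK x ∈ K := by
  have : CompleteSpace K := hK.completeSpace_coe
  exact (K.orthogonalProjectionOnto x).2

lemma projCl_eq_self {x : H} (hx : x ∈ K) : projCl K hK x = x := by
  have : CompleteSpace K := hK.completeSpace_coe
  exact K.starProjection_eq_self_iff.2 hx

lemma sub_projCl_mem_orthogonal (x : H) : x - projCl K hK x ∈ Kᗮ := by
  have : CompleteSpace K := hK.completeSpace_coe
  exact K.sub_starProjection_mem_orthogonal x

end projCl

namespace Setup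

variable (S : Setup H) {At : H →ₗ.[ℂ] H}

lemma inner_Agaminv (g f : H) : inner ℂ g (S.Agaminv f) = inner ℂ (S.Agamstarinv g) f := by
  have hdense : Dense (S.Agam.domain : Set H) := S.dense_Amin.mono S.Amin_le_Agam.1
  conv_lhs => rw [← S.Agamstarinv_right g]
  rw [LinearPMap.adjoint_isFormalAdjoint hdense _ ⟨_, S.Agaminv_mem f⟩, S.Agaminv_right]

lemma uzeta_add_Agaminv (u : S.Amax.domain) (y : H) :
    S.uzeta u + S.Agaminv y = u - S.Agaminv (S.Amax u - y) := by
  rw [uzeta, map_sub]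
  abel

lemma vzeta_mem_Wsub {v : S.Amax'.domain} (hv : (v : H) ∈ At.adjoint.domain) :
    S.vzeta v ∈ S.Wsub At :=
  Submodule.le_topologicalClosure _ (Submodule.subset_span ⟨v, hv, rfl⟩)

lemma mk_Amax_mem_graph (h2 : At ≤ S.Amax) {u : S.Amax.domain} (hu : (u : H) ∈ At.domain) :
    ((u : H), S.Amax u) ∈ At.graph := by
  rw [← h2.2 (x := ⟨u, hu⟩) rfl]
  exact At.mem_graph ⟨u, hu⟩

lemma mk_Agaminv_mem_graph (h1 : S.Amin ≤ At) (hcl : IsClosed (At.graph : Set (H × H)))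
    {f : H} (hf : f ∈ (S.Wsub At)ᗮ) : (S.Agaminv f, f) ∈ At.graph := by
  have hdense : Dense (At.domain : Set H) := S.dense_Amin.mono h1.1
  have hle : At.adjoint ≤ S.Amax' := LinearPMap.adjoint_le_adjoint S.dense_Amin h1
  refine LinearPMap.mem_graph_of_forall_inner_adjoint hdense hcl fun v => ?_
  let v' : S.Amax'.domain := ⟨v, hle.1 v.2⟩
  have hsplit : (v : H) = S.Agamstarinv (S.Amax' v') + S.vzeta v' := by
    rw [vzeta, add_sub_cancel]
  have hperp : inner ℂ (S.vzeta v') f = 0 :=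
    (Submodule.mem_orthogonal _ f).1 hf _ (S.vzeta_mem_Wsub v.2)
  rw [hle.2 (y := v') rfl, inner_Agaminv, hsplit, inner_add_left, hperp, add_zero]

lemma Tgraph_eq (h1 : S.Amin ≤ At) (h2 : At ≤ S.Amax)
    (hcl : IsClosed (At.graph : Set (H × H))) :
    S.Tgraph At = {p | p.2 ∈ S.Wsub At ∧ (p.1 + S.Agaminv p.2, p.2) ∈ At.graph} := by
  ext ⟨x, y⟩
  constructor
  · rintro ⟨u, hu, rfl, rfl⟩
    refine ⟨projCl_mem _ _ _, ?_⟩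
    have hf := S.mk_Agaminv_mem_graph h1 hcl
      (sub_projCl_mem_orthogonal (S.Wsub At) (S.isClosed_Wsub At) (S.Amax u))
    have := At.graph.sub_mem (S.mk_Amax_mem_graph h2 hu) hf
    rwa [Prod.mk_sub_mk, sub_sub_cancel, ← uzeta_add_Agaminv] at this
  · rintro ⟨hy, hgraph⟩
    obtain ⟨w, hw, hAw⟩ := (LinearPMap.mem_graph_iff _).1 hgraph
    let u : S.Amax.domain := ⟨w, h2.1 w.2⟩
    have hAu : S.Amax u = y := (h2.2 rfl).symm.trans hAw
    refine ⟨u, w.2, ?_, ?_⟩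
    · change x = (w : H) - S.Agaminv (S.Amax u)
      rw [hAu, hw, add_sub_cancel_right]
    · rw [hAu, projCl_eq_self _ _ hy]

lemma domain_eq_dzeta {T : H →ₗ.[ℂ] H} (hT : (T.graph : Set (H × H)) = S.Tgraph At) :
    (T.domain : Set H) = S.dzeta At := by
  ext x
  constructor
  · intro hx
    obtain ⟨y, hy⟩ := LinearPMap.mem_domain_iff.1 hx
    rw [← SetLike.mem_coe, hT] at hy
    obtain ⟨u, hu, hxu, -⟩ := hy
    exact ⟨u, hu, hxu⟩
  · rintro ⟨u, hu, rfl⟩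
    refine LinearPMap.mem_domain_iff.2 ⟨S.projW At (S.Amax u), ?_⟩
    rw [← SetLike.mem_coe, hT]
    exact ⟨u, hu, rfl, rfl⟩

lemma mem_domain_of_mk_mem_Tgraph (h1 : S.Amin ≤ At) (h2 : At ≤ S.Amax)
    (hcl : IsClosed (At.graph : Set (H × H))) {u : S.Amax.domain}
    (hu : (S.uzeta u, S.projW At (S.Amax u)) ∈ S.Tgraph At) : (u : H) ∈ At.domain := by
  rw [S.Tgraph_eq h1 h2 hcl] at hu
  obtain ⟨-, hmem⟩ := hu
  rw [S.uzeta_add_Agaminv, projW] at hmem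
  have hf := S.mk_Agaminv_mem_graph h1 hcl
    (sub_projCl_mem_orthogonal (S.Wsub At) (S.isClosed_Wsub At) (S.Amax u))
  have hsum := At.domain.add_mem (LinearPMap.mem_domain_of_mem_graph hmem)
    (LinearPMap.mem_domain_of_mem_graph hf)
  rwa [sub_add_cancel] at hsum

end Setup

theorem statement_3 (S : Setup H) (At : H →ₗ.[ℂ] H)
    (h1 : S.Amin ≤ At) (h2 : At ≤ S.Amax)
    (hcl : IsClosed (At.graph : Set (H × H)))
    (T : H →ₗ.[ℂ] H) (hT : (T.graph : Set (H × H)) = S.Tgraph At) :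
    closure (T.domain : Set H) = (S.Vsub At : Set H) ∧
    (∀ x : T.domain, T x ∈ S.Wsub At) ∧
    IsClosed (T.graph : Set (H × H)) ∧
    (At.domain : Set H) =
      {x : H | ∃ hx : x ∈ S.Amax.domain,
        (S.uzeta ⟨x, hx⟩, S.projW At (S.Amax ⟨x, hx⟩)) ∈ T.graph} := by
  have hgraph := hT.trans (S.Tgraph_eq h1 h2 hcl)
  refine ⟨?_, fun x => ?_, ?_, ?_⟩
  · rw [Setup.Vsub, ← S.domain_eq_dzeta hT, Submodule.span_eq,
      Submodule.topologicalClosure_coe]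
  · have hx : ((x : H), T x) ∈ (T.graph : Set (H × H)) := T.mem_graph x
    exact (hgraph ▸ hx).1
  · rw [hgraph]
    exact ((S.isClosed_Wsub At).preimage continuous_snd).inter
      (hcl.preimage (by fun_prop))
  · ext x
    constructor
    · intro hx
      refine ⟨h2.1 hx, ?_⟩
      rw [← SetLike.mem_coe, hT]
      exact ⟨⟨x, h2.1 hx⟩, hx, rfl, rfl⟩
    · rintro ⟨hx, hxT⟩
      rw [← SetLike.mem_coe, hT] at hxT
      exact S.mem_domain_of_mk_mem_Tgraph h1 h2 hcl hxT

end GrubbExt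
end
end

section
/- (Corollary 5.2, kernel and range.) Let Ã ∈ M be closed and λ ∈ ρ(A_γ). Then ker(Ã − λ) = ker T^λ and ran(Ã − λ) = ran T^λ + (H ⊖ W_{λ̄}), where H ⊖ W_{λ̄} is the orthogonal complement of W_{λ̄} in H. In particular, Ã − λ : D(Ã) → H is bijective if and only if T^λ : D(T^λ) → W_{λ̄} is bijective. -/
/-!
The heart of the matter is that every `h ⊥ W_{λ̄}` lies in `ran(Ã - λ)`, with preimage
`(A_γ - λ)⁻¹ h`: orthogonality of `h` to all `pr^{λ̄}_{ζ'} v`, `v ∈ D(Ã*)`, unfolds to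
`⟪Ã* v, (A_γ - λ)⁻¹ h⟫ = ⟪v, h + λ (A_γ - λ)⁻¹ h⟫`, which places
`((A_γ - λ)⁻¹ h, h + λ (A_γ - λ)⁻¹ h)` in the graph of `Ã** = Ã`, `Ã` being closed.
Writing `u ∈ D(Ã)` as `pr^λ_ζ u + (A_γ - λ)⁻¹ (A_max - λ) u` and splitting `(A_max - λ) u` along
`W_{λ̄} ⊕ W_{λ̄}ᗮ` then gives both identities. Bijectivity is a formal consequence of them,
since the graph of `T^λ` is a linear subspace whose second components lie in `W_{λ̄}`.
-/

noncomputable section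

open Filter Topology

namespace GrubbExt

variable {H : Type*} [NormedAddCommGroup H] [InnerProductSpace ℂ H] [CompleteSpace H]

section Adjoint

variable {𝕜 E F : Type*} [RCLike 𝕜] [NormedAddCommGroup E] [InnerProductSpace 𝕜 E]
  [CompleteSpace E] [NormedAddCommGroup F] [InnerProductSpace 𝕜 F]

theorem _root_.LinearPMap.adjoint_le_adjoint_s11 {T T' : E →ₗ.[𝕜] F}
    (hd : Dense (T.domain : Set E)) (h : T ≤ T') : T'.adjoint ≤ T.adjoint :=
  LinearPMap.IsFormalAdjoint.le_adjoint hd fun x y => by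
    rw [← (LinearPMap.adjoint_isFormalAdjoint (hd.mono h.1)).symm ⟨x, h.1 x.2⟩ y]
    exact congrArg (inner 𝕜 · (y : F)) (h.2 rfl)

variable [CompleteSpace F]

theorem _root_.Submodule.adjoint_adjoint_le {g : Submodule 𝕜 (E × F)}
    (hg : IsClosed (g : Set (E × F))) : g.adjoint.adjoint ≤ g := by
  intro x hx
  set G : Submodule 𝕜 (WithLp 2 (E × F)) := g.comap (WithLp.linearEquiv 2 𝕜 (E × F)).toLinearMap
  have : CompleteSpace G :=
    (hg.preimage (WithLp.prodContinuousLinearEquiv 2 𝕜 E F).continuous).completeSpace_coe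
  suffices WithLp.toLp 2 x ∈ Gᗮᗮ by simpa [G, Submodule.orthogonal_orthogonal] using this
  refine (Submodule.mem_orthogonal _ _).2 fun p hp => ?_
  -- `p = (p₁, p₂) ⊥ g` says exactly that `(p₂, -p₁)` lies in `g.adjoint`.
  have hp' : (p.snd, -p.fst) ∈ g.adjoint := by
    refine (Submodule.mem_adjoint_iff _ _).2 fun a b hab => ?_
    have := (Submodule.mem_orthogonal _ _).1 hp (WithLp.toLp 2 (a, b)) (by simpa [G] using hab)
    rw [WithLp.prod_inner_apply] at this
    simp only [inner_neg_right, sub_neg_eq_add]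
    simpa [add_comm] using this
  have := (Submodule.mem_adjoint_iff _ _).1 hx _ _ hp'
  rw [inner_neg_left] at this
  rw [WithLp.prod_inner_apply, WithLp.ofLp_fst, WithLp.ofLp_snd]
  linear_combination -this

theorem _root_.LinearPMap.mem_graph_of_forall_inner_adjoint_s11 {T : E →ₗ.[𝕜] F}
    (hd : Dense (T.domain : Set E)) (hcl : T.IsClosed) {x : E × F}
    (h : ∀ v : T.adjoint.domain, inner 𝕜 (T.adjoint v) x.1 = inner 𝕜 (v : F) x.2) :
    x ∈ T.graph := by
  refine Submodule.adjoint_adjoint_le hcl ?_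
  rw [← LinearPMap.adjoint_graph_eq_graph_adjoint hd, Submodule.mem_adjoint_iff]
  intro a b hab
  obtain ⟨v, rfl, rfl⟩ := (LinearPMap.mem_graph_iff _).1 hab
  rw [h v, sub_self]

end Adjoint

section Relations

variable {R M N : Type*} [Ring R] [AddCommGroup M] [Module R M] [AddCommGroup N] [Module R N]

theorem _root_.Submodule.forall_existsUnique_fst_iff (G : Submodule R (M × N))
    (W : Submodule R N) :
    (∀ w ∈ W, ∃! x, (x, w) ∈ G) ↔ (∀ w ∈ W, ∃ x, (x, w) ∈ G) ∧ ∀ x, (x, 0) ∈ G → x = 0 := by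
  refine ⟨fun h => ⟨fun w hw => (h w hw).exists,
    fun x hx => (h 0 W.zero_mem).unique hx G.zero_mem⟩, ?_⟩
  rintro ⟨hex, hinj⟩ w hw
  obtain ⟨x, hx⟩ := hex w hw
  exact ⟨x, hx, fun y hy => sub_eq_zero.1 (hinj _ (by simpa using G.sub_mem hy hx))⟩

theorem _root_.LinearPMap.forall_existsUnique_sub_smul_iff (P : M →ₗ.[R] M) (lam : R) :
    (∀ f, ∃! u : P.domain, P u - lam • (u : M) = f) ↔
      (∀ f, ∃ u : P.domain, P u - lam • (u : M) = f) ∧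
        ∀ x (hx : x ∈ P.domain), P ⟨x, hx⟩ = lam • x → x = 0 := by
  refine ⟨fun h => ⟨fun f => (h f).exists, fun x hx hPx => ?_⟩, ?_⟩
  · have hx0 : P ⟨x, hx⟩ - lam • x = 0 := by rw [hPx, sub_self]
    have h00 : P 0 - lam • ((0 : P.domain) : M) = 0 := by simp
    exact congrArg Subtype.val ((h 0).unique hx0 h00)
  rintro ⟨hex, hinj⟩ f
  obtain ⟨u, rfl⟩ := hex f
  refine ⟨u, rfl, fun v hv => ?_⟩
  have hvu : P (v - u) = lam • ((v - u : P.domain) : M) := by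
    rw [LinearPMap.map_sub, Submodule.coe_sub, smul_sub, sub_eq_sub_iff_sub_eq_sub]
    exact hv
  exact Subtype.ext (sub_eq_zero.1 (hinj _ (v - u).2 hvu))

end Relations

section Orthogonal

variable {𝕜 E : Type*} [RCLike 𝕜] [NormedAddCommGroup E] [InnerProductSpace 𝕜 E]

theorem _root_.Submodule.forall_exists_add_mem_orthogonal_iff {W : Submodule 𝕜 E}
    [W.HasOrthogonalProjection] {Y : Set E} (hY : Y ⊆ W) :
    (∀ f, ∃ y g : E, y ∈ Y ∧ g ∈ Wᗮ ∧ f = y + g) ↔ (W : Set E) ⊆ Y := by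
  refine ⟨fun h w hw => ?_, fun h f => ?_⟩
  · obtain ⟨y, g, hy, hg, rfl⟩ := h w
    have hgW : g ∈ W := by simpa using W.sub_mem hw (hY hy)
    rwa [(Submodule.disjoint_def.1 W.orthogonal_disjoint) g hgW hg, add_zero]
  · obtain ⟨y, hy, g, hg, rfl⟩ := W.exists_add_mem_mem_orthogonal f
    exact ⟨y, g, h hy, hg, rfl⟩

theorem forall_existsUnique_iff_of_ker_range {P : E →ₗ.[𝕜] E} {lam : 𝕜}
    {G : Submodule 𝕜 (E × E)} {W : Submodule 𝕜 E} [W.HasOrthogonalProjection]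
    (hGW : ∀ p ∈ G, p.2 ∈ W)
    (hker : {x | ∃ hx : x ∈ P.domain, P ⟨x, hx⟩ = lam • x} = {x | (x, (0 : E)) ∈ G})
    (hran : {f | ∃ u : P.domain, P u - lam • (u : E) = f} =
      {f | ∃ y g : E, (∃ x, (x, y) ∈ G) ∧ g ∈ Wᗮ ∧ f = y + g}) :
    (∀ f, ∃! u : P.domain, P u - lam • (u : E) = f) ↔ ∀ w ∈ W, ∃! x, (x, w) ∈ G := by
  rw [P.forall_existsUnique_sub_smul_iff, G.forall_existsUnique_fst_iff W]
  have hsurj := Submodule.forall_exists_add_mem_orthogonal_iff (W := W) (Y := {y | ∃ x, (x, y) ∈ G})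
    fun y ⟨x, hx⟩ => hGW _ hx
  simp only [Set.ext_iff, Set.mem_ofPred_eq] at hker hran
  simp only [Set.mem_ofPred_eq, Set.subset_def, SetLike.mem_coe] at hsurj
  simp only [hran, hsurj, ← hker, forall_exists_index]

end Orthogonal

theorem IsResolvent.inner_apply_eq_inner_apply_adjoint {P : H →ₗ.[ℂ] H}
    (hd : Dense (P.domain : Set H)) {lam : ℂ} {R R' : H →L[ℂ] H} (hR : IsResolvent P lam R)
    (hR' : IsResolvent P.adjoint (starRingEnd ℂ lam) R') (a b : H) :
    inner ℂ (R a) b = inner ℂ a (R' b) := by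
  have hPP := (LinearPMap.adjoint_isFormalAdjoint hd).symm ⟨R a, hR.mem a⟩ ⟨R' b, hR'.mem b⟩
  calc inner ℂ (R a) b
      = inner ℂ (R a) (P.adjoint ⟨R' b, hR'.mem b⟩ - starRingEnd ℂ lam • R' b) := by
        rw [hR'.right]
    _ = inner ℂ (P ⟨R a, hR.mem a⟩ - lam • R a) (R' b) := by
        rw [inner_sub_left, inner_sub_right, inner_smul_left, inner_smul_right, hPP]
    _ = inner ℂ a (R' b) := by rw [hR.right]

namespace Setup

instance (S : Setup H) (At : H →ₗ.[ℂ] H) (lam : ℂ) (R' : H →L[ℂ] H) :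
    CompleteSpace (S.WLsub At lam R') :=
  (S.isClosed_WLsub At lam R').completeSpace_coe

theorem projWL_eq_starProjection (S : Setup H) (At : H →ₗ.[ℂ] H) (lam : ℂ) (R' : H →L[ℂ] H) :
    S.projWL At lam R' = (S.WLsub At lam R').starProjection :=
  rfl

def TgraphLSub (S : Setup H) (At : H →ₗ.[ℂ] H) (lam : ℂ) (R R' : H →L[ℂ] H) :
    Submodule ℂ (H × H) :=
  let shifted := S.Amax.toFun - lam • S.Amax.domain.subtype
  (At.domain.comap S.Amax.domain.subtype).map
    ((S.Amax.domain.subtype - R.toLinearMap ∘ₗ shifted).prod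
      ((S.projWL At lam R').toLinearMap ∘ₗ shifted))

theorem coe_TgraphLSub (S : Setup H) (At : H →ₗ.[ℂ] H) (lam : ℂ) (R R' : H →L[ℂ] H) :
    (S.TgraphLSub At lam R R' : Set (H × H)) = S.TgraphL At lam R R' := by
  ext ⟨x, y⟩
  simp [TgraphLSub, TgraphL, uzetaL, eq_comm]

variable {S : Setup H} {At : H →ₗ.[ℂ] H} {lam : ℂ} {Rg R' : H →L[ℂ] H}

theorem resolvent_solves_of_mem_orthogonal (h1 : S.Amin ≤ At)
    (hcl : IsClosed (At.graph : Set (H × H))) (hRg : IsResolvent S.Agam lam Rg)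
    (hR' : IsResolvent S.Agam.adjoint (starRingEnd ℂ lam) R') {h : H}
    (hh : h ∈ (S.WLsub At lam R')ᗮ) :
    ∃ hm : Rg h ∈ At.domain, At ⟨Rg h, hm⟩ - lam • Rg h = h := by
  have hle : At.adjoint ≤ S.Amax' := LinearPMap.adjoint_le_adjoint_s11 S.dense_Amin h1
  have hgraph : (Rg h, h + lam • Rg h) ∈ At.graph := by
    refine LinearPMap.mem_graph_of_forall_inner_adjoint_s11 (S.dense_Amin.mono h1.1) hcl fun v => ?_
    set k := At.adjoint v - starRingEnd ℂ lam • (v : H)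
    have hzeta : S.vzetaL lam R' ⟨v, hle.1 v.2⟩ = v - R' k := by
      rw [vzetaL, ← hle.2 (x := v) (y := ⟨v, hle.1 v.2⟩) rfl]
    have horth : inner ℂ ((v : H) - R' k) h = 0 := by
      rw [← hzeta]
      refine (Submodule.mem_orthogonal _ h).1 hh _ (Submodule.le_topologicalClosure _ ?_)
      exact Submodule.subset_span ⟨⟨v, hle.1 v.2⟩, v.2, rfl⟩
    have hres : inner ℂ k (Rg h) = inner ℂ (R' k) h := by
      rw [← inner_conj_symm, IsResolvent.inner_apply_eq_inner_apply_adjoint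
        (S.dense_Amin.mono S.Amin_le_Agam.1) hRg hR', inner_conj_symm]
    rw [inner_sub_left] at horth
    rw [show At.adjoint v = k + starRingEnd ℂ lam • (v : H) by simp [k], inner_add_left,
      inner_smul_left, Complex.conj_conj, inner_add_right, inner_smul_right, hres]
    linear_combination -horth
  obtain ⟨u, hu, hAu⟩ := (LinearPMap.mem_graph_iff _).1 hgraph
  dsimp only at hu hAu
  refine ⟨hu ▸ u.2, ?_⟩
  rw [show (⟨Rg h, hu ▸ u.2⟩ : At.domain) = u from Subtype.ext hu.symm, hAu, add_sub_cancel_right]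

theorem ker_sub_smul_eq (h1 : S.Amin ≤ At) (h2 : At ≤ S.Amax)
    (hcl : IsClosed (At.graph : Set (H × H))) (hRg : IsResolvent S.Agam lam Rg)
    (hR' : IsResolvent S.Agam.adjoint (starRingEnd ℂ lam) R') :
    {x : H | ∃ hx : x ∈ At.domain, At ⟨x, hx⟩ = lam • x} =
      {x : H | (x, (0 : H)) ∈ S.TgraphL At lam Rg R'} := by
  ext x
  constructor
  · rintro ⟨hx, hAx⟩
    have hf : S.Amax ⟨x, h2.1 hx⟩ - lam • x = 0 := by
      rw [← h2.2 (x := ⟨x, hx⟩) rfl, hAx, sub_self]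
    exact ⟨⟨x, h2.1 hx⟩, hx, by simp [uzetaL, hf], by simp [hf]⟩
  · rintro ⟨u, hu, hx, hT⟩
    dsimp only at hx hT
    subst hx
    have hf : S.Amax u - lam • (u : H) ∈ (S.WLsub At lam R')ᗮ := by
      rwa [eq_comm, projWL_eq_starProjection, Submodule.starProjection_apply_eq_zero_iff] at hT
    obtain ⟨hm, hRf⟩ := resolvent_solves_of_mem_orthogonal h1 hcl hRg hR' hf
    refine ⟨At.domain.sub_mem hu hm, ?_⟩
    have hsplit : At ⟨uzetaL S lam Rg u, At.domain.sub_mem hu hm⟩ =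
        At ⟨u, hu⟩ - At ⟨_, hm⟩ := LinearPMap.map_sub At ⟨u, hu⟩ ⟨_, hm⟩
    rw [hsplit, h2.2 (y := u) rfl, sub_eq_iff_eq_add.1 hRf, uzetaL, smul_sub]
    abel

theorem range_sub_smul_eq (h1 : S.Amin ≤ At) (h2 : At ≤ S.Amax)
    (hcl : IsClosed (At.graph : Set (H × H))) (hRg : IsResolvent S.Agam lam Rg)
    (hR' : IsResolvent S.Agam.adjoint (starRingEnd ℂ lam) R') :
    {f : H | ∃ u : At.domain, At u - lam • (u : H) = f} =
      {f : H | ∃ y g : H, (∃ x : H, (x, y) ∈ S.TgraphL At lam Rg R') ∧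
        g ∈ (S.WLsub At lam R')ᗮ ∧ f = y + g} := by
  set W := S.WLsub At lam R'
  ext f
  constructor
  · rintro ⟨u, rfl⟩
    refine ⟨W.starProjection (At u - lam • (u : H)), _, ⟨_, ⟨u, h2.1 u.2⟩, u.2, rfl, ?_⟩,
      W.sub_starProjection_mem_orthogonal _, (add_sub_cancel _ _).symm⟩
    rw [projWL_eq_starProjection, h2.2 (x := u) (y := ⟨u, h2.1 u.2⟩) rfl]
  · rintro ⟨y, g, ⟨x, u, hu, -, hy⟩, hg, rfl⟩
    dsimp only at hy
    have hcorr : g - (S.Amax u - lam • (u : H) - y) ∈ Wᗮ := by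
      rw [hy, projWL_eq_starProjection]
      exact Wᗮ.sub_mem hg (W.sub_starProjection_mem_orthogonal _)
    obtain ⟨hm, hRf⟩ := resolvent_solves_of_mem_orthogonal h1 hcl hRg hR' hcorr
    refine ⟨⟨u, hu⟩ + ⟨_, hm⟩, ?_⟩
    rw [LinearPMap.map_add, Submodule.coe_add, smul_add, h2.2 (y := u) rfl]
    linear_combination (norm := abel) hRf

end Setup

theorem statement_11 (S : Setup H) (At : H →ₗ.[ℂ] H)
    (h1 : S.Amin ≤ At) (h2 : At ≤ S.Amax)
    (hcl : IsClosed (At.graph : Set (H × H)))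
    (lam : ℂ) (Rg R' : H →L[ℂ] H)
    (hRg : IsResolvent S.Agam lam Rg)
    (hR' : IsResolvent S.Agam.adjoint (starRingEnd ℂ lam) R') :
    {x : H | ∃ hx : x ∈ At.domain, At ⟨x, hx⟩ = lam • x} =
      {x : H | (x, (0 : H)) ∈ S.TgraphL At lam Rg R'} ∧
    {f : H | ∃ u : At.domain, At u - lam • (u : H) = f} =
      {f : H | ∃ y g : H, (∃ x : H, (x, y) ∈ S.TgraphL At lam Rg R') ∧
        g ∈ (S.WLsub At lam R')ᗮ ∧ f = y + g} ∧
    ((∀ f : H, ∃! u : At.domain, At u - lam • (u : H) = f) ↔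
      ∀ w : H, w ∈ S.WLsub At lam R' →
        ∃! x : H, (x, w) ∈ S.TgraphL At lam Rg R') := by
  have hker := Setup.ker_sub_smul_eq h1 h2 hcl hRg hR'
  have hran := Setup.range_sub_smul_eq h1 h2 hcl hRg hR'
  refine ⟨hker, hran, ?_⟩
  rw [← Setup.coe_TgraphLSub] at hker hran ⊢
  refine forall_existsUnique_iff_of_ker_range (fun p hp => ?_) hker hran
  obtain ⟨u, -, rfl⟩ := hp
  exact Submodule.starProjection_apply_mem _ _

end GrubbExt
end
end
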